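/- arXiv:2108.03069 — 2 statements merged into one kernel-verified Lean document; each statement's English description precedes it below -/
import Mathlib

section
/- Suppose S=(s_i) is a de Bruijn sequence of order n > 1. Then D^{-1}(S) consists of a disjoint pair of complementary primitive (n+1)-window sequences, each of period 2^n. -/
/-- A sequence has `m` as a (not necessarily least) period. -/
def hasPer (s : ℕ → Bool) (m : ℕ) : Prop := ∀ i, s (i + m) = s i

/-- `m` is the (least positive) period of `s`. -/
def isPeriod (s : ℕ → Bool) (m : ℕ) : Prop :=
  0 < m ∧ hasPer s m ∧ ∀ k, 0 < k → hasPer s k → m ≤ k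

/-- The `n`-tuple appearing at position `i` of `s`. -/
def tup (s : ℕ → Bool) (n i : ℕ) : Fin n → Bool := fun k => s (i + (k : ℕ))

/-- The reverse of an `n`-tuple. -/
def tupRev {n : ℕ} (u : Fin n → Bool) : Fin n → Bool := fun k => u k.rev

/-- An `n`-window sequence of period `m`. -/
def isNWindow (s : ℕ → Bool) (n m : ℕ) : Prop :=
  isPeriod s m ∧ ∀ i j, tup s n i = tup s n j → i ≡ j [MOD m]

/-- The weight of (one period of) `s`. -/
def wt (s : ℕ → Bool) (m : ℕ) : ℕ := ∑ i ∈ Finset.range m, (if s i then 1 else 0)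

/-- The complement of a sequence. -/
def seqCompl (s : ℕ → Bool) : ℕ → Bool := fun i => !(s i)

/-- Two sequences are disjoint if they share no `n`-tuple. -/
def disjointSeq (s t : ℕ → Bool) (n : ℕ) : Prop := ∀ i j, tup s n i ≠ tup t n j

/-- A sequence is primitive if it is disjoint from its complement. -/
def primitiveSeq (s : ℕ → Bool) (n : ℕ) : Prop := disjointSeq s (seqCompl s) n

/-- An orientable sequence of order `n` and period `m`. -/
def isOrientable (s : ℕ → Bool) (n m : ℕ) : Prop :=
  isNWindow s n m ∧ ∀ i j, tup s n i ≠ tupRev (tup s n j)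

/-- Two sequences are o-disjoint: disjoint, and no `n`-tuple of one is the
reverse of an `n`-tuple of the other. -/
def oDisjoint (s t : ℕ → Bool) (n : ℕ) : Prop :=
  disjointSeq s t n ∧ ∀ i j, tup s n i ≠ tupRev (tup t n j)

/-- The Lempel homomorphism `D` on periodic sequences. -/
def Dmap (t : ℕ → Bool) : ℕ → Bool := fun i => xor (t i) (t (i + 1))

/-- The set `D⁻¹(s)` of sequences mapping to `s` under `D`. -/
def Dinv (s : ℕ → Bool) : Set (ℕ → Bool) := { t | Dmap t = s }

/-!
The preimages of `s` under `D` are its running XOR `t` and the complement of `t`; they have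
period `2 ^ n` because a de Bruijn sequence of order `n` has even weight `2 ^ (n - 1)`.
An `(n + 1)`-window of `t` determines the `n`-window of `s` at the same position, so the window
property and the minimality of the period lift from `s` to `t`. Since `t` and its complement
have the same image under `D`, a window they share would sit at positions congruent modulo the
period, where `t` agrees with itself, not with its complement.
-/

def xorPrefix (s : ℕ → Bool) : ℕ → Bool
  | 0 => false
  | i + 1 => xorPrefix s i ^^ s i

lemma Dmap_xorPrefix (s : ℕ → Bool) : Dmap (xorPrefix s) = s := by
  funext i
  simp [Dmap, xorPrefix]

lemma Dmap_seqCompl (t : ℕ → Bool) : Dmap (seqCompl t) = Dmap t := by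
  funext i
  simp [Dmap, seqCompl]

lemma eq_xor_xorPrefix_of_Dmap_eq {s u : ℕ → Bool} (hu : Dmap u = s) (i : ℕ) :
    u i = (u 0 ^^ xorPrefix s i) := by
  induction i with
  | zero => simp [xorPrefix]
  | succ i ih =>
    have hi : (u i ^^ u (i + 1)) = s i := congrFun hu i
    rw [xorPrefix, ← hi, ih]
    cases u 0 <;> cases xorPrefix s i <;> simp

lemma Dinv_eq_pair (s : ℕ → Bool) : Dinv s = {xorPrefix s, seqCompl (xorPrefix s)} := by
  ext u
  simp only [Dinv, Set.mem_ofPred_eq, Set.mem_insert_iff, Set.mem_singleton_iff]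
  constructor
  · intro hu
    cases h0 : u 0
    · left; funext i; simp [eq_xor_xorPrefix_of_Dmap_eq hu i, h0]
    · right; funext i; simp [eq_xor_xorPrefix_of_Dmap_eq hu i, h0, seqCompl]
  · rintro (rfl | rfl)
    · exact Dmap_xorPrefix s
    · rw [Dmap_seqCompl, Dmap_xorPrefix]

lemma xorPrefix_eq_decide_odd_wt (s : ℕ → Bool) (k : ℕ) :
    xorPrefix s k = decide (Odd (wt s k)) := by
  induction k with
  | zero => simp [xorPrefix, wt]
  | succ k ih =>
    have hwt : wt s (k + 1) = wt s k + if s k then 1 else 0 := Finset.sum_range_succ _ _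
    cases hk : s k
    · simp [xorPrefix, hwt, hk, ih]
    · simp [xorPrefix, hwt, hk, ih, Nat.odd_add_one, -Nat.not_odd_iff_even]

lemma hasPer_xorPrefix {s : ℕ → Bool} {m : ℕ} (hp : hasPer s m) (hw : Even (wt s m)) :
    hasPer (xorPrefix s) m := by
  intro i
  induction i with
  | zero => simpa [xorPrefix_eq_decide_odd_wt, xorPrefix] using hw
  | succ i ih => rw [Nat.add_right_comm, xorPrefix, xorPrefix, ih, hp]

lemma hasPer_seqCompl {t : ℕ → Bool} {m : ℕ} (hp : hasPer t m) : hasPer (seqCompl t) m :=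
  fun i => by simp [seqCompl, hp i]

lemma hasPer_Dmap {t : ℕ → Bool} {m : ℕ} (hp : hasPer t m) : hasPer (Dmap t) m :=
  fun i => by simp [Dmap, Nat.add_right_comm i m 1, hp i, hp (i + 1)]

lemma seqCompl_ne_self (t : ℕ → Bool) : seqCompl t ≠ t :=
  fun h => by simpa [seqCompl] using congrFun h 0

lemma tup_Dmap_eq_of_tup_eq {u v : ℕ → Bool} {n i j : ℕ}
    (h : tup u (n + 1) i = tup v (n + 1) j) : tup (Dmap u) n i = tup (Dmap v) n j := by
  funext q
  have h0 := congrFun h q.castSucc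
  have h1 := congrFun h q.succ
  simp only [tup, Fin.val_castSucc, Fin.val_succ, ← add_assoc] at h0 h1
  simp [tup, Dmap, h0, h1]

lemma isNWindow.bijective_tup {s : ℕ → Bool} {n : ℕ} (h : isNWindow s n (2 ^ n)) :
    Function.Bijective (fun i : Fin (2 ^ n) => tup s n i) := by
  rw [Fintype.bijective_iff_injective_and_card]
  refine ⟨fun i j hij => Fin.ext ?_, by simp⟩
  simpa [Nat.ModEq, Nat.mod_eq_of_lt i.isLt, Nat.mod_eq_of_lt j.isLt] using h.2 i j hij

lemma card_filter_head_eq_true (n : ℕ) :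
    (Finset.univ.filter fun u : Fin (n + 1) → Bool => u 0 = true).card = 2 ^ n := by
  have : (Finset.univ.filter fun u : Fin (n + 1) → Bool => u 0 = true) =
      Fintype.piFinset fun k => if k = 0 then {true} else Finset.univ := by
    ext u
    simp [Fin.forall_fin_succ]
  simp [this, Fin.prod_univ_succ]

lemma wt_of_isNWindow {s : ℕ → Bool} {n : ℕ} (h : isNWindow s (n + 1) (2 ^ (n + 1))) :
    wt s (2 ^ (n + 1)) = 2 ^ n := by
  calc wt s (2 ^ (n + 1))
      = ∑ i : Fin (2 ^ (n + 1)), if tup s (n + 1) i 0 then 1 else 0 := by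
        simp [wt, tup, Fin.sum_univ_eq_sum_range (fun i => if s i then 1 else 0)]
    _ = ∑ u : Fin (n + 1) → Bool, if u 0 then 1 else 0 :=
        (Equiv.ofBijective _ h.bijective_tup).sum_comp fun u => if u 0 then 1 else 0
    _ = 2 ^ n := by rw [← Finset.card_filter, card_filter_head_eq_true]

section Lift

variable {s u : ℕ → Bool} {n m : ℕ}

lemma isNWindow_succ_of_Dmap_eq (hs : isNWindow s n m) (hu : Dmap u = s) (hp : hasPer u m) :
    isNWindow u (n + 1) m := by
  subst hu
  exact ⟨⟨hs.1.1, hp, fun k hk hpk => hs.1.2.2 k hk (hasPer_Dmap hpk)⟩,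
    fun i j hij => hs.2 i j (tup_Dmap_eq_of_tup_eq hij)⟩

lemma primitiveSeq_succ_of_Dmap_eq (hs : isNWindow s n m) (hu : Dmap u = s) (hp : hasPer u m) :
    primitiveSeq u (n + 1) := by
  intro i j hij
  have hmod : i ≡ j [MOD m] := by
    have hD := tup_Dmap_eq_of_tup_eq hij
    rw [Dmap_seqCompl, hu] at hD
    exact hs.2 i j hD
  have huij : u i = u j := by
    rw [← Function.Periodic.map_mod_nat (f := u) hp i, hmod,
      Function.Periodic.map_mod_nat (f := u) hp j]
  simpa [tup, seqCompl, huij] using congrFun hij 0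

end Lift

/-- Corollary 1 (Lempel): if `S` is a de Bruijn sequence of order `n > 1` (an
`n`-window sequence of period `2^n`), then `D⁻¹(S)` consists of a disjoint pair
of complementary primitive `(n+1)`-window sequences of period `2^n`. -/
theorem lempel_homo (n : ℕ) (s : ℕ → Bool) (hn : 1 < n)
    (h : isNWindow s n (2 ^ n)) :
    ∃ t t' : ℕ → Bool, t ≠ t' ∧ Dinv s = {t, t'} ∧ t' = seqCompl t ∧
      disjointSeq t t' (n + 1) ∧ primitiveSeq t (n + 1) ∧ primitiveSeq t' (n + 1) ∧
      isNWindow t (n + 1) (2 ^ n) ∧ isNWindow t' (n + 1) (2 ^ n) := by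
  obtain ⟨k, rfl⟩ : ∃ k, n = k + 2 := ⟨n - 2, by omega⟩
  have heven : Even (wt s (2 ^ (k + 2))) := by
    rw [wt_of_isNWindow h]
    exact Nat.even_pow.2 ⟨even_two, k.succ_ne_zero⟩
  set t := xorPrefix s
  have hDt : Dmap t = s := Dmap_xorPrefix s
  have hDt' : Dmap (seqCompl t) = s := by rw [Dmap_seqCompl, hDt]
  have hpt : hasPer t (2 ^ (k + 2)) := hasPer_xorPrefix h.1.2.1 heven
  have hprim := primitiveSeq_succ_of_Dmap_eq h hDt hpt
  refine ⟨t, seqCompl t, (seqCompl_ne_self t).symm, Dinv_eq_pair s, rfl, hprim, hprim,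
    primitiveSeq_succ_of_Dmap_eq h hDt' (hasPer_seqCompl hpt),
    isNWindow_succ_of_Dmap_eq h hDt hpt, isNWindow_succ_of_Dmap_eq h hDt' (hasPer_seqCompl hpt)⟩
end

section
/- Suppose S_n is a good orientable sequence of order n with odd weight and period m_n, and recursively define S_{i+1} = E(D^{-1}(S_i)) for i ≥ n (taking the single sequence in D^{-1}(S_i) and applying E), and let m_i denote the period of S_i for i > n. Then S_i is a good orientable sequence of order i of odd weight for every i ≥ n, and for every j ≥ 0: if m_n is odd then m_{n+2j+1} = 2·m_{n+2j} and m_{n+2j+2} = 2·m_{n+2j+1} + 1, while if m_n is even then m_{n+2j+1} = 2·m_{n+2j} + 1 and m_{n+2j+2} = 2·m_{n+2j+1}. -/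
/-- `1^len` occurs at position `i` of `s`. -/
def occOnes (s : ℕ → Bool) (len i : ℕ) : Prop := ∀ k, k < len → s (i + k) = true

/-- `0^len` occurs at position `i` of `s`. -/
def occZeros (s : ℕ → Bool) (len i : ℕ) : Prop := ∀ k, k < len → s (i + k) = false

/-- The periodic sequence of period dividing `m + 1` obtained from the generating cycle
`[s_0, ..., s_{r-1}, 1, s_r, ..., s_{m-1}]`, i.e. by inserting an extra `1` at
position `r` of the generating cycle `[s_0, ..., s_{m-1}]`. -/
def insertAt (s : ℕ → Bool) (m r : ℕ) : ℕ → Bool := fun i =>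
  if i % (m + 1) < r then s (i % (m + 1))
  else if i % (m + 1) = r then true
  else s (i % (m + 1) - 1)

/-- A good orientable sequence: an `OS(n)` of period `m` in which the tuple
`0^(n-4)` occurs exactly once in a period. -/
def goodOS (s : ℕ → Bool) (n m : ℕ) : Prop :=
  isOrientable s n m ∧ ∃! i, i < m ∧ occZeros s (n - 4) i

/-- One step of the recursion `S' = E(D⁻¹(S))`: some `t ∈ D⁻¹(S)` (where `S` has
period `m` and hence `t` has period `2m`) contains exactly one occurrence of the
tuple `1^(k-4)` in a period, at position `r`, and `S'` is `t` if `t` has odd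
weight and otherwise is obtained from `t` by inserting an extra `1` there. -/
def EDinvStep (s : ℕ → Bool) (m k : ℕ) (s' : ℕ → Bool) : Prop :=
  ∃ t ∈ Dinv s, ∃ r, r < 2 * m ∧ occOnes t (k - 4) r ∧
    (∀ i, i < 2 * m → occOnes t (k - 4) i → i = r) ∧
    s' = if Odd (wt t (2 * m)) then t else insertAt t (2 * m) r

/-!
If `D T = S` and `S` has odd weight over its period `m`, then `T (i + m) = !T i`, so `T` has
period `2m` and weight `m`. Equal `(k+1)`-windows of `T` give equal `k`-windows of `S`, hence
positions congruent mod `m`, and their equal first letters rule out a shift by `m`; reversal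
commutes with `D`. So `T` is an `OS(k+1)`, and its runs `0^(k-3)` are its runs `1^(k-3)` shifted
by `m`. For odd `m` this is already `E(T)`. For even `m`, `E` lengthens the unique run `1^(k-3)`
of `T` to a run `1^(k-2)` that occurs once per period and in no window of `T`: a window of `E(T)`
either meets it at one of four offsets, which locates the window, or is a window of `T`.
The period `2m` or `2m + 1` has the opposite parity to `m`, which gives the two-step pattern.
-/

open Finset

section Periodic

variable {s : ℕ → Bool} {m n L a b : ℕ}

lemma hasPer.apply_add_mul (h : hasPer s m) (x q : ℕ) : s (x + m * q) = s x := by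
  induction q with
  | zero => simp
  | succ q ih => rw [mul_add_one, ← add_assoc, h, ih]

lemma hasPer.apply_modEq (h : hasPer s m) (hab : a ≡ b [MOD m]) : s a = s b := by
  rw [← Nat.mod_add_div a m, ← Nat.mod_add_div b m, h.apply_add_mul, h.apply_add_mul, hab]

lemma isPeriod_unique (ha : isPeriod s a) (hb : isPeriod s b) : a = b :=
  le_antisymm (ha.2.2 b hb.1 hb.2.1) (hb.2.2 a ha.1 ha.2.1)

lemma hasPer.sum_range_add_eq_wt (h : hasPer s m) (c : ℕ) :
    ∑ l ∈ range m, (if s (c + l) then 1 else 0) = wt s m := by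
  induction c with
  | zero => simp [wt]
  | succ c ih =>
    have h1 := sum_range_succ (fun l => if s (c + l) then 1 else 0) m
    have h2 := sum_range_succ' (fun l => if s (c + l) then 1 else 0) m
    have h3 : ∑ l ∈ range m, (if s (c + 1 + l) then 1 else 0) =
        ∑ l ∈ range m, (if s (c + (l + 1)) then 1 else 0) :=
      sum_congr rfl fun l _ => by rw [add_assoc, add_comm 1 l]
    simp only [h c, add_zero] at h1 h2
    omega

lemma tup_eq_iff {u : ℕ → Bool} : tup s n a = tup u n b ↔ ∀ j < n, s (a + j) = u (b + j) :=
  funext_iff.trans ⟨fun h j hj => h ⟨j, hj⟩, fun h j => h j j.2⟩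

lemma tup_eq_tupRev_iff :
    tup s n a = tupRev (tup s n b) ↔ ∀ j < n, s (a + j) = s (b + (n - 1 - j)) := by
  refine funext_iff.trans ⟨fun h j hj => ?_, fun h j => ?_⟩
  · simpa [tup, tupRev, Nat.sub_sub, add_comm 1 j] using h ⟨j, hj⟩
  · simpa [tup, tupRev, Nat.sub_sub, add_comm 1 (j : ℕ)] using h j j.2

lemma tup_eq_tupRev_comm {u v : Fin n → Bool} (h : u = tupRev v) : v = tupRev u := by
  funext j
  simp [h, tupRev]

lemma hasPer.tup_modEq (h : hasPer s m) (hab : a ≡ b [MOD m]) : tup s n a = tup s n b :=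
  tup_eq_iff.2 fun j _ => h.apply_modEq (hab.add_right j)

lemma hasPer.occOnes_modEq (h : hasPer s m) (hab : a ≡ b [MOD m]) (ha : occOnes s L a) :
    occOnes s L b := fun j hj => h.apply_modEq (hab.add_right j).symm ▸ ha j hj

lemma hasPer.occZeros_modEq (h : hasPer s m) (hab : a ≡ b [MOD m]) (ha : occZeros s L a) :
    occZeros s L b := fun j hj => h.apply_modEq (hab.add_right j).symm ▸ ha j hj

lemma isPeriod_of_window (h : hasPer s m) (hm : 0 < m)
    (hwin : ∀ a b, tup s n a = tup s n b → a ≡ b [MOD m]) : isPeriod s m := by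
  refine ⟨hm, h, fun q hq hqper => Nat.le_of_dvd hq (Nat.modEq_zero_iff_dvd.1 (hwin q 0 ?_))⟩
  exact tup_eq_iff.2 fun j _ => by rw [add_comm q, hqper, zero_add]

end Periodic

section Runs

variable {s : ℕ → Bool} {L n a b o : ℕ}

lemma occOnes_succ_iff_left : occOnes s (L + 1) a ↔ s a = true ∧ occOnes s L (a + 1) := by
  simp only [occOnes, Nat.forall_lt_succ_left, add_zero, add_right_comm a 1, add_assoc]

lemma occOnes_succ_iff_right : occOnes s (L + 1) a ↔ occOnes s L a ∧ s (a + L) = true :=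
  Nat.forall_lt_succ_right

lemma occOnes_of_tup_eq (h : tup s n a = tup s n b) (hL : o + L ≤ n) (ha : occOnes s L (a + o)) :
    occOnes s L (b + o) := fun j hj => by
  rw [add_assoc, ← tup_eq_iff.1 h (o + j) (by omega), ← add_assoc]
  exact ha j hj

lemma occOnes_of_tup_eq_tupRev (h : tup s n a = tupRev (tup s n b)) (hL : o + L ≤ n)
    (ha : occOnes s L (a + o)) : occOnes s L (b + (n - L - o)) := fun j hj => by
  have := tup_eq_tupRev_iff.1 h (o + (L - 1 - j)) (by omega)
  rw [show b + (n - 1 - (o + (L - 1 - j))) = b + (n - L - o) + j by omega, ← add_assoc] at this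
  rw [← this]
  exact ha _ (by omega)

end Runs

section Locus

variable {P : ℕ → Prop} {p r : ℕ}

lemma iff_modEq_of_unique (hP : ∀ a b, a ≡ b [MOD p] → P a → P b) (hr : r < p) (hPr : P r)
    (huniq : ∀ i < p, P i → i = r) (x : ℕ) : P x ↔ x ≡ r [MOD p] := by
  refine ⟨fun hx => ?_, fun hx => hP r x hx.symm hPr⟩
  have := huniq _ (Nat.mod_lt x (by omega)) (hP _ _ (Nat.mod_modEq x p).symm hx)
  rw [Nat.ModEq, this, Nat.mod_eq_of_lt hr]

lemma existsUnique_lt_of_iff_modEq (hp : 0 < p) (h : ∀ x, P x ↔ x ≡ r [MOD p]) :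
    ∃! i, i < p ∧ P i :=
  ⟨r % p, ⟨Nat.mod_lt r hp, (h _).2 (Nat.mod_modEq r p)⟩, fun i ⟨hi, hPi⟩ => by
    rw [← (h i).1 hPi, Nat.mod_eq_of_lt hi]⟩

lemma exists_lt_modEq_add (c a : ℕ) (hp : 0 < p) : ∃ δ < p, a ≡ c + δ [MOD p] := by
  refine ⟨(a + (p - c % p)) % p, Nat.mod_lt _ hp, ?_⟩
  calc a ≡ a + p [MOD p] := (Nat.add_mod_right a p).symm
    _ = c % p + (a + (p - c % p)) := by have := Nat.mod_lt c hp; omega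
    _ ≡ c + (a + (p - c % p)) % p [MOD p] := (Nat.mod_modEq c p).add (Nat.mod_modEq _ p).symm

end Locus

section Antiperiodic

variable {t : ℕ → Bool} {m L a b : ℕ}

lemma hasPer_two_mul_of_antiperiodic (ht : ∀ i, t (i + m) = !t i) : hasPer t (2 * m) :=
  fun i => by rw [two_mul, ← add_assoc, ht, ht, Bool.not_not]

lemma wt_two_mul_of_antiperiodic (ht : ∀ i, t (i + m) = !t i) : wt t (2 * m) = m := by
  rw [wt, two_mul, sum_range_add, ← sum_add_distrib]
  calc ∑ i ∈ range m, ((if t i then 1 else 0) + if t (m + i) then 1 else 0)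
      = ∑ _i ∈ range m, 1 := sum_congr rfl fun i _ => by rw [add_comm m, ht]; cases t i <;> rfl
    _ = m := by simp

lemma modEq_two_mul_of_antiperiodic (ht : ∀ i, t (i + m) = !t i) (hab : a ≡ b [MOD m])
    (h : t a = t b) : a ≡ b [MOD 2 * m] := by
  wlog hle : a ≤ b generalizing a b
  · exact (this hab.symm h.symm (by omega)).symm
  obtain ⟨q, hq⟩ := (Nat.modEq_iff_dvd' hle).1 hab
  obtain ⟨q, rfl | rfl⟩ := Nat.even_or_odd' q
  · exact (Nat.modEq_iff_dvd' hle).2 ⟨q, by rw [hq, mul_left_comm, mul_assoc]⟩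
  · have hb : b = a + 2 * m * q + m := by
      have : m * (2 * q + 1) = 2 * m * q + m := by ring
      omega
    rw [hb, ht, (hasPer_two_mul_of_antiperiodic ht).apply_add_mul] at h
    cases ha : t a <;> simp [ha] at h

lemma occZeros_iff_occOnes_add (ht : ∀ i, t (i + m) = !t i) (x : ℕ) :
    occZeros t L x ↔ occOnes t L (x + m) :=
  forall₂_congr fun j _ => by rw [add_right_comm, ht, Bool.not_eq_true']

lemma add_modEq_iff_modEq_add {x r : ℕ} : x + m ≡ r [MOD 2 * m] ↔ x ≡ r + m [MOD 2 * m] := by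
  have hcycle : ∀ y, y + m + m ≡ y [MOD 2 * m] := fun y => by
    rw [add_assoc, ← two_mul]; exact Nat.add_mod_right y (2 * m)
  exact ⟨fun h => (hcycle x).symm.trans (h.add_right m),
    fun h => (h.add_right m).trans (hcycle r)⟩

end Antiperiodic

section Lempel

variable {t : ℕ → Bool} {k m a b : ℕ}

lemma ite_modEq_add_sum_Dmap (t : ℕ → Bool) (c j : ℕ) :
    (if t (c + j) then 1 else 0) ≡
      (if t c then 1 else 0) + ∑ l ∈ range j, (if Dmap t (c + l) then 1 else 0) [MOD 2] := by
  induction j with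
  | zero => simp [Nat.ModEq]
  | succ j ih =>
    rw [sum_range_succ, ← add_assoc (if t c then 1 else 0)]
    refine Nat.ModEq.trans ?_ (ih.add_right _)
    rw [Dmap, ← add_assoc c j 1]
    cases t (c + j) <;> cases t (c + j + 1) <;> decide

lemma Dinv_antiperiodic (hs : hasPer (Dmap t) m) (hodd : Odd (wt (Dmap t) m)) (i : ℕ) :
    t (i + m) = !t i := by
  have h := ite_modEq_add_sum_Dmap t i m
  rw [hs.sum_range_add_eq_wt] at h
  obtain ⟨w, hw⟩ := hodd
  rw [hw, Nat.ModEq] at h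
  cases hi : t i <;> cases him : t (i + m) <;> simp [hi, him] at h ⊢
  all_goals omega

lemma tup_Dmap_eq (h : tup t (k + 1) a = tup t (k + 1) b) :
    tup (Dmap t) k a = tup (Dmap t) k b := by
  rw [tup_eq_iff] at h ⊢
  intro j hj
  simp only [Dmap, add_assoc, h j (by omega), h (j + 1) (by omega)]

lemma tup_Dmap_eq_tupRev (h : tup t (k + 1) a = tupRev (tup t (k + 1) b)) :
    tup (Dmap t) k a = tupRev (tup (Dmap t) k b) := by
  rw [tup_eq_tupRev_iff] at h ⊢
  intro j hj
  simp only [Dmap, add_assoc, h j (by omega), h (j + 1) (by omega)]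
  rw [Bool.xor_comm, show k + 1 - 1 - j = k - 1 - j + 1 by omega,
    show k + 1 - 1 - (j + 1) = k - 1 - j by omega]

theorem isOrientable_of_Dmap (hs : isOrientable (Dmap t) k m) (hodd : Odd (wt (Dmap t) m)) :
    isOrientable t (k + 1) (2 * m) := by
  have hanti := Dinv_antiperiodic hs.1.1.2.1 hodd
  have hwin : ∀ a b, tup t (k + 1) a = tup t (k + 1) b → a ≡ b [MOD 2 * m] := fun a b h =>
    modEq_two_mul_of_antiperiodic hanti (hs.1.2 a b (tup_Dmap_eq h))
      (by simpa [tup] using congrFun h 0)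
  exact ⟨⟨isPeriod_of_window (hasPer_two_mul_of_antiperiodic hanti) (by have := hs.1.1.1; omega)
    hwin, hwin⟩, fun a b h => hs.2 a b (tup_Dmap_eq_tupRev h)⟩

end Lempel

section UniqueRun

variable {t : ℕ → Bool} {p r L : ℕ}

lemma not_occOnes_succ_of_iff_modEq (hp : 2 ≤ p) (hrun : ∀ x, occOnes t L x ↔ x ≡ r [MOD p])
    (x : ℕ) : ¬ occOnes t (L + 1) x := fun h => by
  have h₀ := (hrun x).1 (occOnes_succ_iff_right.1 h).1
  have h₁ := (hrun (x + 1)).1 (occOnes_succ_iff_left.1 h).2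
  have h01 : 0 ≡ 1 [MOD p] := Nat.ModEq.add_left_cancel' x (h₀.trans h₁.symm)
  rw [Nat.ModEq, Nat.zero_mod, Nat.mod_eq_of_lt (by omega)] at h01
  exact zero_ne_one h01

lemma eq_false_after_run (hp : 2 ≤ p) (hrun : ∀ x, occOnes t L x ↔ x ≡ r [MOD p]) :
    t (r + L) = false := by
  by_contra h
  exact not_occOnes_succ_of_iff_modEq hp hrun r
    (occOnes_succ_iff_right.2 ⟨(hrun r).2 rfl, by simpa using h⟩)

lemma eq_false_before_run (hp : 2 ≤ p) (hrun : ∀ x, occOnes t L x ↔ x ≡ r [MOD p]) :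
    t (r + (p - 1)) = false := by
  by_contra h
  refine not_occOnes_succ_of_iff_modEq hp hrun _ (occOnes_succ_iff_left.2 ⟨by simpa using h, ?_⟩)
  rw [(hrun _), show r + (p - 1) + 1 = r + p by omega]
  exact Nat.add_mod_right r p

/-- With `X = Y` the window `X 0 1^(N-4) 0 Y` around the run would be a palindrome. -/
lemma run_neighbours_ne {N : ℕ} (ht : hasPer t p) (hor : ∀ a b, tup t N a ≠ tupRev (tup t N b))
    (hN : 4 ≤ N) (hp : 2 ≤ p) (hrun : ∀ x, occOnes t (N - 4) x ↔ x ≡ r [MOD p]) :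
    t (r + (p - 2)) ≠ t (r + (N - 3)) := fun hXY => by
  have hval : ∀ j < N, t (r + (p - 2) + j) =
      if j = 0 ∨ j = N - 1 then t (r + (N - 3)) else decide (2 ≤ j ∧ j ≤ N - 3) := by
    intro j hj
    rcases (by omega : j = 0 ∨ j = 1 ∨ (2 ≤ j ∧ j ≤ N - 3) ∨ j = N - 2 ∨ j = N - 1)
      with rfl | rfl | hj' | rfl | rfl
    · simpa using hXY
    · rw [show r + (p - 2) + 1 = r + (p - 1) by omega, eq_false_before_run hp hrun,
        if_neg (by omega)]
      simp
    · rw [show r + (p - 2) + j = r + (j - 2) + p by omega, ht, (hrun r).2 rfl _ (by omega),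
        if_neg (by omega)]
      simpa using hj'
    · rw [show r + (p - 2) + (N - 2) = r + (N - 4) + p by omega, ht, eq_false_after_run hp hrun,
        if_neg (by omega), eq_comm, decide_eq_false_iff_not]
      omega
    · rw [show r + (p - 2) + (N - 1) = r + (N - 3) + p by omega, ht]
      simp
  refine hor (r + (p - 2)) (r + (p - 2)) (tup_eq_tupRev_iff.2 fun j hj => ?_)
  rw [hval j hj, hval _ (by omega)]
  by_cases hend : j = 0 ∨ j = N - 1
  · rw [if_pos hend, if_pos (by omega)]
  · rw [if_neg hend, if_neg (by omega), decide_eq_decide]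
    omega

end UniqueRun

section Insertion

variable {t : ℕ → Bool} {p r N : ℕ}

lemma hasPer_insertAt : hasPer (insertAt t p r) (p + 1) :=
  fun i => by simp only [insertAt, Nat.add_mod_right]

lemma insertAt_self (hr : r < p) : insertAt t p r r = true := by
  simp [insertAt, Nat.mod_eq_of_lt (show r < p + 1 by omega)]

lemma insertAt_add_one_add (ht : hasPer t p) (hr : r < p) {i : ℕ} (hi : i < p) :
    insertAt t p r (r + 1 + i) = t (r + i) := by
  by_cases hwrap : r + 1 + i < p + 1
  · simp only [insertAt, Nat.mod_eq_of_lt hwrap]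
    rw [if_neg (by omega), if_neg (by omega), show r + 1 + i - 1 = r + i by omega]
  · have hmod : (r + 1 + i) % (p + 1) = r + i - p := by
      rw [Nat.mod_eq_sub_mod (by omega), Nat.mod_eq_of_lt (by omega)]
      omega
    simp only [insertAt, hmod]
    have hper := ht (r + i - p)
    rw [show r + i - p + p = r + i by omega] at hper
    rw [if_pos (by omega), hper]

lemma wt_insertAt (ht : hasPer t p) (hr : r < p) :
    wt (insertAt t p r) (p + 1) = wt t p + 1 := by
  rw [← hasPer_insertAt.sum_range_add_eq_wt r, sum_range_succ', ← ht.sum_range_add_eq_wt r,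
    add_zero, insertAt_self hr]
  congr 1
  exact sum_congr rfl fun l hl => by
    rw [show r + (l + 1) = r + 1 + l by omega, insertAt_add_one_add ht hr (mem_range.1 hl)]

lemma occOnes_insertAt_iff (ht : hasPer t p) (hr : r < p) (hN : 4 ≤ N) (hNp : N ≤ p + 2)
    (hp : 2 ≤ p) (hrun : ∀ x, occOnes t (N - 4) x ↔ x ≡ r [MOD p]) (x : ℕ) :
    occOnes (insertAt t p r) (N - 3) x ↔ x ≡ r [MOD p + 1] := by
  have hbase : occOnes (insertAt t p r) (N - 3) r := by
    rw [show N - 3 = N - 4 + 1 by omega, occOnes_succ_iff_left]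
    refine ⟨insertAt_self hr, fun j hj => ?_⟩
    rw [insertAt_add_one_add ht hr (by omega)]
    exact (hrun r).2 rfl j hj
  refine ⟨fun hx => ?_, fun hx => hasPer_insertAt.occOnes_modEq hx.symm hbase⟩
  obtain ⟨δ, hδ, hxδ⟩ := exists_lt_modEq_add (r + 1) x (show 0 < p + 1 by omega)
  have hx' := hasPer_insertAt.occOnes_modEq hxδ hx
  by_cases hδp : δ = p
  · subst hδp
    refine hxδ.trans ?_
    rw [show r + 1 + δ = r + (δ + 1) by omega]
    exact Nat.add_mod_right r (δ + 1)
  exfalso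
  by_cases hfit : δ + (N - 3) ≤ p
  · refine not_occOnes_succ_of_iff_modEq hp hrun (r + δ) fun j hj => ?_
    rw [add_assoc, ← insertAt_add_one_add ht hr (by omega : δ + j < p), ← add_assoc]
    exact hx' j (by omega)
  · have h := hx' (p - 1 - δ) (by omega)
    rw [show r + 1 + δ + (p - 1 - δ) = r + 1 + (p - 1) by omega,
      insertAt_add_one_add ht hr (by omega), eq_false_before_run hp hrun] at h
    exact Bool.false_ne_true h

lemma tup_insertAt (ht : hasPer t p) (hr : r < p) (hN : 4 ≤ N) (hNp : N ≤ p + 2) (hp : 2 ≤ p)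
    (hrun : ∀ x, occOnes t (N - 4) x ↔ x ≡ r [MOD p]) {δ : ℕ} (hδ : δ + 4 ≤ p) :
    tup (insertAt t p r) N (r + 1 + δ) = tup t N (r + δ) := by
  refine tup_eq_iff.2 fun j hj => ?_
  by_cases hj' : δ + j < p
  · rw [add_assoc (r + 1), insertAt_add_one_add ht hr hj', add_assoc]
  · have hbase := (occOnes_insertAt_iff ht hr hN hNp hp hrun r).2 rfl
    rw [show r + 1 + δ + j = r + (δ + j - p) + (p + 1) by omega, hasPer_insertAt,
      show r + δ + j = r + (δ + j - p) + p by omega, ht, hbase _ (by omega),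
      (hrun r).2 rfl _ (by omega)]

lemma exists_add_four_le_of_forall_not_modEq {a : ℕ} (ha : ∀ o ≤ 3, ¬ a + o ≡ r [MOD p + 1]) :
    ∃ δ, δ + 4 ≤ p ∧ a ≡ r + 1 + δ [MOD p + 1] := by
  obtain ⟨δ, hδ, haδ⟩ := exists_lt_modEq_add (r + 1) a (show 0 < p + 1 by omega)
  refine ⟨δ, ?_, haδ⟩
  by_contra hlt
  apply ha (p - δ) (by omega)
  calc a + (p - δ) ≡ r + 1 + δ + (p - δ) [MOD p + 1] := haδ.add_right _
    _ = r + (p + 1) := by omega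
    _ ≡ r [MOD p + 1] := Nat.add_mod_right r (p + 1)

lemma modEq_of_tup_insertAt_eq (hor : isOrientable t N p) (hr : r < p) (hN : 4 ≤ N)
    (hNp : N ≤ p + 2) (hp : 2 ≤ p) (hrun : ∀ x, occOnes t (N - 4) x ↔ x ≡ r [MOD p]) {a b : ℕ}
    (h : tup (insertAt t p r) N a = tup (insertAt t p r) N b) : a ≡ b [MOD p + 1] := by
  have ht := hor.1.1.2.1
  have hmark := occOnes_insertAt_iff ht hr hN hNp hp hrun
  have htransfer : ∀ {a b}, tup (insertAt t p r) N a = tup (insertAt t p r) N b →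
      ∀ o ≤ 3, a + o ≡ r [MOD p + 1] → b + o ≡ r [MOD p + 1] := fun h o _ hao =>
    (hmark _).1 (occOnes_of_tup_eq h (by omega) ((hmark _).2 hao))
  by_cases ha : ∃ o ≤ 3, a + o ≡ r [MOD p + 1]
  · obtain ⟨o, ho, hao⟩ := ha
    exact Nat.ModEq.add_right_cancel' o (hao.trans (htransfer h o ho hao).symm)
  push Not at ha
  have hb : ∀ o ≤ 3, ¬ b + o ≡ r [MOD p + 1] := fun o ho hbo =>
    ha o ho (htransfer h.symm o ho hbo)
  obtain ⟨δa, hδa, haδ⟩ := exists_add_four_le_of_forall_not_modEq ha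
  obtain ⟨δb, hδb, hbδ⟩ := exists_add_four_le_of_forall_not_modEq hb
  have hδ : r + δa ≡ r + δb [MOD p] := hor.1.2 _ _ (by
    rw [← tup_insertAt ht hr hN hNp hp hrun hδa, ← tup_insertAt ht hr hN hNp hp hrun hδb,
      ← hasPer_insertAt.tup_modEq haδ, ← hasPer_insertAt.tup_modEq hbδ, h])
  rw [(Nat.ModEq.add_left_cancel' r hδ).eq_of_lt_of_lt (by omega) (by omega)] at haδ
  exact haδ.trans hbδ.symm

lemma modEq_of_tup_insertAt_eq_tupRev (ht : hasPer t p) (hr : r < p) (hN : 4 ≤ N)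
    (hNp : N ≤ p + 2) (hp : 2 ≤ p) (hrun : ∀ x, occOnes t (N - 4) x ↔ x ≡ r [MOD p]) {a b o : ℕ}
    (h : tup (insertAt t p r) N a = tupRev (tup (insertAt t p r) N b)) (ho : o ≤ 3)
    (hao : a + o ≡ r [MOD p + 1]) : b + (3 - o) ≡ r [MOD p + 1] := by
  have hmark := occOnes_insertAt_iff ht hr hN hNp hp hrun
  have := occOnes_of_tup_eq_tupRev h (by omega) ((hmark _).2 hao)
  rwa [show N - (N - 3) - o = 3 - o by omega, hmark] at this

/- The window meeting the run at offset `o ∈ {2, 3}` is `... X 0 1^(N-3) ...` and its reverse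
partner is `... 1^(N-3) 0 Y ...`, with `X` and `Y` facing each other. -/
lemma insertAt_tup_ne_tupRev_of_modEq (hor : isOrientable t N p) (hr : r < p) (hN : 4 ≤ N)
    (hNp : N ≤ p + 2) (hp : 2 ≤ p) (hrun : ∀ x, occOnes t (N - 4) x ↔ x ≡ r [MOD p]) {a b o : ℕ}
    (ho2 : 2 ≤ o) (ho3 : o ≤ 3) (hao : a + o ≡ r [MOD p + 1]) :
    tup (insertAt t p r) N a ≠ tupRev (tup (insertAt t p r) N b) := fun h => by
  have ht := hor.1.1.2.1
  have hbo := modEq_of_tup_insertAt_eq_tupRev ht hr hN hNp hp hrun h ho3 hao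
  have hX : a + (o - 2) ≡ r + 1 + (p - 2) [MOD p + 1] := by
    refine Nat.ModEq.add_right_cancel' 2 ?_
    rw [show a + (o - 2) + 2 = a + o by omega, show r + 1 + (p - 2) + 2 = r + (p + 1) by omega]
    exact hao.trans (Nat.add_mod_right r (p + 1)).symm
  have hY : b + (N - 1 - (o - 2)) ≡ r + 1 + (N - 3) [MOD p + 1] := by
    rw [show b + (N - 1 - (o - 2)) = b + (3 - o) + (N - 2) by omega,
      show r + 1 + (N - 3) = r + (N - 2) by omega]
    exact hbo.add_right _
  have hXY := tup_eq_tupRev_iff.1 h (o - 2) (by omega)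
  rw [hasPer_insertAt.apply_modEq hX, hasPer_insertAt.apply_modEq hY,
    insertAt_add_one_add ht hr (by omega), insertAt_add_one_add ht hr (by omega)] at hXY
  exact run_neighbours_ne ht hor.2 hN hp hrun hXY

lemma insertAt_tup_ne_tupRev (hor : isOrientable t N p) (hr : r < p) (hN : 4 ≤ N)
    (hNp : N ≤ p + 2) (hp : 2 ≤ p) (hrun : ∀ x, occOnes t (N - 4) x ↔ x ≡ r [MOD p]) (a b : ℕ) :
    tup (insertAt t p r) N a ≠ tupRev (tup (insertAt t p r) N b) := by
  have ht := hor.1.1.2.1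
  intro h
  by_cases ha : ∃ o ≤ 3, a + o ≡ r [MOD p + 1]
  · obtain ⟨o, ho, hao⟩ := ha
    by_cases ho2 : 2 ≤ o
    · exact insertAt_tup_ne_tupRev_of_modEq hor hr hN hNp hp hrun ho2 ho hao h
    · exact insertAt_tup_ne_tupRev_of_modEq hor hr hN hNp hp hrun (by omega) (by omega)
        (modEq_of_tup_insertAt_eq_tupRev ht hr hN hNp hp hrun h ho hao) (tup_eq_tupRev_comm h)
  push Not at ha
  have hb : ∀ o ≤ 3, ¬ b + o ≡ r [MOD p + 1] := fun o ho hbo => ha (3 - o) (by omega)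
    (modEq_of_tup_insertAt_eq_tupRev ht hr hN hNp hp hrun (tup_eq_tupRev_comm h) ho hbo)
  obtain ⟨δa, hδa, haδ⟩ := exists_add_four_le_of_forall_not_modEq ha
  obtain ⟨δb, hδb, hbδ⟩ := exists_add_four_le_of_forall_not_modEq hb
  apply hor.2 (r + δa) (r + δb)
  rw [← tup_insertAt ht hr hN hNp hp hrun hδa, ← tup_insertAt ht hr hN hNp hp hrun hδb,
    ← hasPer_insertAt.tup_modEq haδ, ← hasPer_insertAt.tup_modEq hbδ, h]

theorem isOrientable_insertAt (hor : isOrientable t N p) (hr : r < p) (hN : 4 ≤ N)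
    (hNp : N ≤ p + 2) (hp : 2 ≤ p) (hrun : ∀ x, occOnes t (N - 4) x ↔ x ≡ r [MOD p]) :
    isOrientable (insertAt t p r) N (p + 1) :=
  have hwin := fun a b => modEq_of_tup_insertAt_eq (a := a) (b := b) hor hr hN hNp hp hrun
  ⟨⟨isPeriod_of_window hasPer_insertAt (by omega) hwin, hwin⟩,
    insertAt_tup_ne_tupRev hor hr hN hNp hp hrun⟩

lemma occZeros_insertAt_iff (ht : hasPer t p) (hr : r < p) {L δ₀ : ℕ} (hL : 0 < L)
    (hδ₀ : δ₀ + L ≤ p) (hz : ∀ x, occZeros t L x ↔ x ≡ r + δ₀ [MOD p]) (x : ℕ) :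
    occZeros (insertAt t p r) L x ↔ x ≡ r + 1 + δ₀ [MOD p + 1] := by
  have hshift : ∀ δ, δ + L ≤ p →
      (occZeros (insertAt t p r) L (r + 1 + δ) ↔ occZeros t L (r + δ)) :=
    fun δ hδ => forall₂_congr fun j hj => by
      rw [add_assoc (r + 1), insertAt_add_one_add ht hr (by omega), add_assoc]
  refine ⟨fun hx => ?_, fun hx => hasPer_insertAt.occZeros_modEq hx.symm
    ((hshift δ₀ hδ₀).2 ((hz _).2 rfl))⟩
  obtain ⟨δ, hδ, hxδ⟩ := exists_lt_modEq_add (r + 1) x (show 0 < p + 1 by omega)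
  have hx' := hasPer_insertAt.occZeros_modEq hxδ hx
  have hfit : δ + L ≤ p := by
    by_contra hlt
    have h := hx' (p - δ) (by omega)
    rw [show r + 1 + δ + (p - δ) = r + (p + 1) by omega, hasPer_insertAt, insertAt_self hr] at h
    exact Bool.noConfusion h
  have hδδ₀ := Nat.ModEq.add_left_cancel' r ((hz _).1 ((hshift δ hfit).1 hx'))
  rwa [hδδ₀.eq_of_lt_of_lt (by omega) (by omega)] at hxδ

end Insertion

section GoodOS

variable {s : ℕ → Bool} {k m : ℕ}

lemma two_le_of_isOrientable (h : isOrientable s k m) : 2 ≤ m := by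
  obtain ⟨⟨⟨hm, hper, -⟩, -⟩, hor⟩ := h
  by_contra hlt
  obtain rfl : m = 1 := by omega
  exact hor 0 0 (funext fun j => hper.apply_modEq Nat.modEq_one)

lemma five_le_of_goodOS (h : goodOS s k m) : 5 ≤ k := by
  have hm := two_le_of_isOrientable h.1
  obtain ⟨i, -, huniq⟩ := h.2
  by_contra hlt
  have h₀ := huniq 0 ⟨by omega, fun j hj => by omega⟩
  have h₁ := huniq 1 ⟨by omega, fun j hj => by omega⟩
  omega

/-- A run `0^(k-4)` spanning a whole period would make the weight zero. -/
lemma le_add_three_of_goodOS (h : goodOS s k m) (hodd : Odd (wt s m)) : k ≤ m + 3 := by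
  obtain ⟨u, ⟨-, hu⟩, -⟩ := h.2
  by_contra hlt
  have hzero : wt s m = 0 := by
    rw [← h.1.1.1.2.1.sum_range_add_eq_wt u]
    exact sum_eq_zero fun l hl => by rw [hu l (by simp at hl; omega)]; rfl
  rw [hzero] at hodd
  exact Nat.not_odd_zero hodd

end GoodOS

def nextPeriod (m : ℕ) : ℕ := if Odd m then 2 * m else 2 * m + 1

lemma nextPeriod_of_odd {m : ℕ} (h : Odd m) : nextPeriod m = 2 * m := if_pos h

lemma nextPeriod_of_even {m : ℕ} (h : Even m) : nextPeriod m = 2 * m + 1 :=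
  if_neg (Nat.not_odd_iff_even.2 h)

theorem goodOS_of_EDinvStep {s s' : ℕ → Bool} {k m : ℕ} (hgood : goodOS s k m)
    (hodd : Odd (wt s m)) (hstep : EDinvStep s m (k + 1) s') :
    goodOS s' (k + 1) (nextPeriod m) ∧ Odd (wt s' (nextPeriod m)) := by
  have hm := two_le_of_isOrientable hgood.1
  have hk := five_le_of_goodOS hgood
  have hkm := le_add_three_of_goodOS hgood hodd
  obtain ⟨t, hD, r, hr, hrunr, huniq, rfl⟩ := hstep
  obtain rfl : Dmap t = s := hD
  rw [show k + 1 - 4 = k - 3 by omega] at hrunr huniq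
  have hanti := Dinv_antiperiodic hgood.1.1.1.2.1 hodd
  have hper := hasPer_two_mul_of_antiperiodic hanti
  have hor := isOrientable_of_Dmap hgood.1 hodd
  have hones : ∀ x, occOnes t (k - 3) x ↔ x ≡ r [MOD 2 * m] :=
    iff_modEq_of_unique (fun _ _ => hper.occOnes_modEq) hr hrunr huniq
  have hzeros : ∀ x, occZeros t (k - 3) x ↔ x ≡ r + m [MOD 2 * m] := fun x =>
    (occZeros_iff_occOnes_add hanti x).trans ((hones _).trans add_modEq_iff_modEq_add)
  rcases Nat.even_or_odd m with hme | hmo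
  · rw [nextPeriod_of_even hme, wt_two_mul_of_antiperiodic hanti,
      if_neg (Nat.not_odd_iff_even.2 hme)]
    refine ⟨⟨isOrientable_insertAt hor hr (by omega) (by omega) (by omega)
        (by rwa [show k + 1 - 4 = k - 3 by omega]),
      existsUnique_lt_of_iff_modEq (by omega)
        (occZeros_insertAt_iff hper hr (by omega) (by omega) hzeros)⟩, ?_⟩
    rw [wt_insertAt hper hr, wt_two_mul_of_antiperiodic hanti]
    exact hme.add_one
  · rw [nextPeriod_of_odd hmo, wt_two_mul_of_antiperiodic hanti, if_pos hmo]
    exact ⟨⟨hor, existsUnique_lt_of_iff_modEq (by omega) hzeros⟩,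
      by rwa [wt_two_mul_of_antiperiodic hanti]⟩

lemma odd_nextPeriod_nextPeriod_iff {m : ℕ} : Odd (nextPeriod (nextPeriod m)) ↔ Odd m := by
  rcases Nat.even_or_odd m with hm | hm
  · rw [nextPeriod_of_even hm, nextPeriod_of_odd (odd_two_mul_add_one m)]
    simp [Nat.not_odd_iff_even.2 hm]
  · rw [nextPeriod_of_odd hm, nextPeriod_of_even (even_two_mul m)]
    simp [hm]

lemma periods_of_nextPeriod {f : ℕ → ℕ} {n : ℕ} (hf : ∀ i, n ≤ i → f (i + 1) = nextPeriod (f i))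
    (j : ℕ) :
    (Odd (f n) →
      f (n + 2 * j + 1) = 2 * f (n + 2 * j) ∧ f (n + 2 * j + 2) = 2 * f (n + 2 * j + 1) + 1) ∧
    (Even (f n) →
      f (n + 2 * j + 1) = 2 * f (n + 2 * j) + 1 ∧ f (n + 2 * j + 2) = 2 * f (n + 2 * j + 1)) := by
  have hpar : Odd (f (n + 2 * j)) ↔ Odd (f n) := by
    induction j with
    | zero => rfl
    | succ j ih =>
      rw [show n + 2 * (j + 1) = n + 2 * j + 1 + 1 by ring, hf _ (by omega), hf _ (by omega),
        odd_nextPeriod_nextPeriod_iff, ih]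
  have h₁ := hf (n + 2 * j) (by omega)
  have h₂ : f (n + 2 * j + 2) = nextPeriod (f (n + 2 * j + 1)) := hf _ (by omega)
  refine ⟨fun hodd => ?_, fun heven => ?_⟩
  · rw [nextPeriod_of_odd (hpar.2 hodd)] at h₁
    exact ⟨h₁, by rw [h₂, nextPeriod_of_even (h₁ ▸ even_two_mul _)]⟩
  · have heven' : Even (f (n + 2 * j)) := by
      rwa [← Nat.not_odd_iff_even, hpar, Nat.not_odd_iff_even]
    rw [nextPeriod_of_even heven'] at h₁
    exact ⟨h₁, by rw [h₂, nextPeriod_of_odd (h₁ ▸ odd_two_mul_add_one _)]⟩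

/-- Corollary 2: starting from a good orientable sequence `S_n` of order `n`,
odd weight and period `m_n`, and recursively setting `S_{i+1} = E(D⁻¹(S_i))`
with `m_i` the period of `S_i`, every `S_i` is a good orientable sequence of
order `i` of odd weight, and for every `j ≥ 0`: if `m_n` is odd then
`m_{n+2j+1} = 2 m_{n+2j}` and `m_{n+2j+2} = 2 m_{n+2j+1} + 1`, while if `m_n` is
even then `m_{n+2j+1} = 2 m_{n+2j} + 1` and `m_{n+2j+2} = 2 m_{n+2j+1}`. -/
theorem recursive_family (n : ℕ) (Seq : ℕ → ℕ → Bool) (per : ℕ → ℕ)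
    (hstart : goodOS (Seq n) n (per n)) (hoddw : Odd (wt (Seq n) (per n)))
    (hrec : ∀ i, n ≤ i → EDinvStep (Seq i) (per i) (i + 1) (Seq (i + 1)))
    (hper : ∀ i, n ≤ i → isPeriod (Seq i) (per i)) :
    (∀ i, n ≤ i → goodOS (Seq i) i (per i) ∧ Odd (wt (Seq i) (per i))) ∧
    ∀ j : ℕ,
      (Odd (per n) →
        per (n + 2 * j + 1) = 2 * per (n + 2 * j) ∧
        per (n + 2 * j + 2) = 2 * per (n + 2 * j + 1) + 1) ∧
      (Even (per n) →
        per (n + 2 * j + 1) = 2 * per (n + 2 * j) + 1 ∧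
        per (n + 2 * j + 2) = 2 * per (n + 2 * j + 1)) := by
  have hstep : ∀ i, n ≤ i → goodOS (Seq i) i (per i) ∧ Odd (wt (Seq i) (per i)) →
      per (i + 1) = nextPeriod (per i) ∧
        goodOS (Seq (i + 1)) (i + 1) (per (i + 1)) ∧ Odd (wt (Seq (i + 1)) (per (i + 1))) := by
    rintro i hi ⟨hgood, hodd⟩
    obtain ⟨hgood', hodd'⟩ := goodOS_of_EDinvStep hgood hodd (hrec i hi)
    have hnext := isPeriod_unique (hper (i + 1) (by omega)) hgood'.1.1.1
    exact ⟨hnext, hnext ▸ hgood', hnext ▸ hodd'⟩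
  have hgood : ∀ i, n ≤ i → goodOS (Seq i) i (per i) ∧ Odd (wt (Seq i) (per i)) := by
    intro i hi
    induction i, hi using Nat.le_induction with
    | base => exact ⟨hstart, hoddw⟩
    | succ i hi ih => exact (hstep i hi ih).2
  exact ⟨hgood, periods_of_nextPeriod fun i hi => (hstep i hi (hgood i hi)).1⟩
end
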